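/- arXiv:1108.2835 — 4 statements merged into one kernel-verified Lean document; each statement's English description precedes it below -/
import Mathlib

section
/- For bounded measurable functions g1, g2, f1, f2 on a finite measure space, with Z_i = ∫ e^{g_i} dν, one has |∫ f2 e^{g2} Z_2^{-1} dν − ∫ f1 e^{g1} Z_1^{-1} dν| ≤ ‖f2 − f1‖_∞ + 2(‖f1‖_∞ + ‖f2‖_∞)‖g2 − g1‖_∞. -/
/-!
Write `E₁, E₂` for expectations under the Gibbs measures `P₁ = ν.tilted g₁`, `P₂ = ν.tilted g₂`.
Then `P₂` is the tilt of `P₁` by `h = g₂ - g₁`, whose oscillation is at most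
`δ = 2‖g₂ - g₁‖_∞`. Symmetrizing,
`E₂ f₂ - E₁ f₁ = ½ (E₂ + E₁)(f₂ - f₁) + ½ (E₂ - E₁)(f₁ + f₂)`, and the first half is at most
`‖f₂ - f₁‖_∞`. For the second, `Z = ∫ e^h dP₁` is an average of values of `e^h`, so `log Z`
lies within `δ` of every value of `h`, and `|e^a - e^b| ≤ (e^a + e^b) |a - b|` gives
`|e^h - Z| ≤ δ (e^h + Z)`; integrating against `φ` in `(E₂ - E₁) φ = ∫ φ (e^h - Z) dP₁ / Z`
yields `|(E₂ - E₁) φ| ≤ 2 ‖φ‖_∞ δ`.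
-/

open MeasureTheory Real

lemma Real.abs_exp_sub_exp_le (a b : ℝ) : |exp a - exp b| ≤ (exp a + exp b) * |a - b| := by
  wlog hba : b ≤ a generalizing a b
  · rw [abs_sub_comm, add_comm, abs_sub_comm a b]
    exact this b a (le_of_not_ge hba)
  rw [abs_of_nonneg (sub_nonneg.2 (exp_le_exp.2 hba)), abs_of_nonneg (sub_nonneg.2 hba)]
  have h : 1 - exp (b - a) ≤ a - b := by linarith [add_one_le_exp (b - a)]
  calc exp a - exp b = exp a * (1 - exp (b - a)) := by rw [mul_sub, ← exp_add]; ring_nf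
    _ ≤ exp a * (a - b) := by gcongr
    _ ≤ (exp a + exp b) * (a - b) := by gcongr; linarith [exp_pos b]

namespace MeasureTheory

variable {α : Type*} [MeasurableSpace α] {μ : Measure α}

lemma integrable_exp_of_le [IsFiniteMeasure μ] {g : α → ℝ} (hg : Measurable g) {M : ℝ}
    (hgM : ∀ x, g x ≤ M) : Integrable (fun x ↦ exp (g x)) μ :=
  .of_bound hg.exp.aestronglyMeasurable (exp M) <| ae_of_all _ fun x ↦ by
    rw [norm_of_nonneg (exp_pos _).le]; exact exp_le_exp.2 (hgM x)

lemma integral_tilted_eq_div (g f : α → ℝ) :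
    ∫ x, f x ∂(μ.tilted g) = (∫ x, f x * exp (g x) ∂μ) / ∫ x, exp (g x) ∂μ := by
  rw [integral_tilted, ← integral_div]
  congr 1 with x
  rw [smul_eq_mul]; ring

lemma abs_integral_le_of_forall_abs_le [IsProbabilityMeasure μ] {f : α → ℝ} {C : ℝ}
    (hfC : ∀ x, |f x| ≤ C) : |∫ x, f x ∂μ| ≤ C := by
  simpa using norm_integral_le_of_norm_le_const (μ := μ) (f := f) (C := C) (ae_of_all _ hfC)

section Tilt

variable [IsProbabilityMeasure μ] {h : α → ℝ} {δ : ℝ}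

lemma abs_sub_log_integral_exp_le (hh : Integrable (fun x ↦ exp (h x)) μ)
    (hδ : ∀ x y, |h x - h y| ≤ δ) (x : α) : |h x - log (∫ y, exp (h y) ∂μ)| ≤ δ := by
  have hZ := integral_exp_pos hh
  have hlow : exp (h x - δ) ≤ ∫ y, exp (h y) ∂μ := by
    simpa using integral_mono (integrable_const _) hh
      fun y ↦ exp_le_exp.2 (by linarith [(abs_le.1 (hδ x y)).2])
  have hupp : ∫ y, exp (h y) ∂μ ≤ exp (h x + δ) := by
    simpa using integral_mono hh (integrable_const _)
      fun y ↦ exp_le_exp.2 (by linarith [(abs_le.1 (hδ y x)).2])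
  rw [abs_le]
  constructor
  · linarith [(log_le_iff_le_exp hZ).2 hupp]
  · linarith [(le_log_iff_exp_le hZ).2 hlow]

lemma abs_exp_sub_integral_exp_le (hh : Integrable (fun x ↦ exp (h x)) μ)
    (hδ : ∀ x y, |h x - h y| ≤ δ) (x : α) :
    |exp (h x) - ∫ y, exp (h y) ∂μ| ≤ (exp (h x) + ∫ y, exp (h y) ∂μ) * δ := by
  have hexp_log := exp_log (integral_exp_pos hh)
  calc |exp (h x) - ∫ y, exp (h y) ∂μ|
      ≤ (exp (h x) + ∫ y, exp (h y) ∂μ) * |h x - log (∫ y, exp (h y) ∂μ)| := by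
        simpa only [hexp_log] using abs_exp_sub_exp_le (h x) (log (∫ y, exp (h y) ∂μ))
    _ ≤ (exp (h x) + ∫ y, exp (h y) ∂μ) * δ := by
        gcongr
        exact abs_sub_log_integral_exp_le hh hδ x

lemma abs_integral_tilted_sub_integral_le {φ : α → ℝ} (hφ : Measurable φ) {C : ℝ}
    (hφC : ∀ x, |φ x| ≤ C) (hh : Integrable (fun x ↦ exp (h x)) μ)
    (hδ : ∀ x y, |h x - h y| ≤ δ) :
    |∫ x, φ x ∂(μ.tilted h) - ∫ x, φ x ∂μ| ≤ 2 * C * δ := by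
  set Z := ∫ x, exp (h x) ∂μ with hZdef
  have hZ : 0 < Z := integral_exp_pos hh
  have hφi : Integrable φ μ := .of_bound hφ.aestronglyMeasurable C (ae_of_all _ hφC)
  have hφh : Integrable (fun x ↦ φ x * exp (h x)) μ :=
    hh.bdd_mul hφ.aestronglyMeasurable (ae_of_all _ hφC)
  have hcov : ∫ x, φ x ∂(μ.tilted h) - ∫ x, φ x ∂μ = (∫ x, φ x * (exp (h x) - Z) ∂μ) / Z := by
    simp_rw [mul_sub]
    rw [integral_tilted_eq_div, integral_sub hφh (hφi.mul_const Z), integral_mul_const, ← hZdef]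
    field_simp
  have hnum : |∫ x, φ x * (exp (h x) - Z) ∂μ| ≤ ∫ x, C * δ * (exp (h x) + Z) ∂μ :=
    norm_integral_le_of_norm_le ((hh.add (integrable_const Z)).const_mul _) <|
      ae_of_all _ fun x ↦ by
        rw [norm_eq_abs, abs_mul]
        calc |φ x| * |exp (h x) - Z| ≤ C * ((exp (h x) + Z) * δ) :=
              mul_le_mul (hφC x) (abs_exp_sub_integral_exp_le hh hδ x) (abs_nonneg _)
                ((abs_nonneg _).trans (hφC x))
          _ = C * δ * (exp (h x) + Z) := by ring
  rw [integral_const_mul, integral_add hh (integrable_const Z), integral_const, probReal_univ,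
    one_smul, ← hZdef] at hnum
  rw [hcov, abs_div, abs_of_pos hZ, div_le_iff₀ hZ]
  linarith

lemma abs_integral_tilted_sub_integral_le_of_abs_sub_le {f₁ f₂ : α → ℝ} (hf₁ : Measurable f₁)
    (hf₂ : Measurable f₂) {F₁ F₂ ε : ℝ} (hF₁ : ∀ x, |f₁ x| ≤ F₁) (hF₂ : ∀ x, |f₂ x| ≤ F₂)
    (hε : ∀ x, |f₂ x - f₁ x| ≤ ε) (hh : Integrable (fun x ↦ exp (h x)) μ)
    (hδ : ∀ x y, |h x - h y| ≤ δ) :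
    |∫ x, f₂ x ∂(μ.tilted h) - ∫ x, f₁ x ∂μ| ≤ ε + (F₁ + F₂) * δ := by
  have := isProbabilityMeasure_tilted hh
  have hi₁ (ρ : Measure α) [IsFiniteMeasure ρ] : Integrable f₁ ρ :=
    .of_bound hf₁.aestronglyMeasurable F₁ (ae_of_all _ hF₁)
  have hi₂ (ρ : Measure α) [IsFiniteMeasure ρ] : Integrable f₂ ρ :=
    .of_bound hf₂.aestronglyMeasurable F₂ (ae_of_all _ hF₂)
  have hsymm : ∫ x, f₂ x ∂(μ.tilted h) - ∫ x, f₁ x ∂μ =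
      (∫ x, f₂ x - f₁ x ∂(μ.tilted h) + ∫ x, f₂ x - f₁ x ∂μ
        + (∫ x, f₁ x + f₂ x ∂(μ.tilted h) - ∫ x, f₁ x + f₂ x ∂μ)) / 2 := by
    simp only [integral_sub (hi₂ _) (hi₁ _), integral_add (hi₁ _) (hi₂ _)]
    ring
  have hsum := abs_integral_tilted_sub_integral_le (φ := fun x ↦ f₁ x + f₂ x) (hf₁.add hf₂)
    (fun x ↦ (abs_add_le _ _).trans (add_le_add (hF₁ x) (hF₂ x))) hh hδ
  rw [hsymm, abs_div, abs_two, div_le_iff₀ two_pos]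
  calc _ ≤ |∫ x, f₂ x - f₁ x ∂(μ.tilted h)| + |∫ x, f₂ x - f₁ x ∂μ|
        + |∫ x, f₁ x + f₂ x ∂(μ.tilted h) - ∫ x, f₁ x + f₂ x ∂μ| := abs_add_three _ _ _
    _ ≤ ε + ε + 2 * (F₁ + F₂) * δ := by
        gcongr
        · exact abs_integral_le_of_forall_abs_le hε
        · exact abs_integral_le_of_forall_abs_le hε
    _ = (ε + (F₁ + F₂) * δ) * 2 := by ring

end Tilt

end MeasureTheory

theorem gibbs_expectation_comparison_general
    {Y : Type*} [MeasurableSpace Y] (ν : Measure Y) [IsFiniteMeasure ν] (hν : ν ≠ 0)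
    (g1 g2 f1 f2 : Y → ℝ)
    (hmg1 : Measurable g1) (hmg2 : Measurable g2)
    (hmf1 : Measurable f1) (hmf2 : Measurable f2)
    (Mg1 : ℝ) (hbg1 : ∀ y, |g1 y| ≤ Mg1)
    (F1 : ℝ) (hbf1 : ∀ y, |f1 y| ≤ F1) (F2 : ℝ) (hbf2 : ∀ y, |f2 y| ≤ F2)
    (Cf : ℝ) (hCf : ∀ y, |f2 y - f1 y| ≤ Cf)
    (Cg : ℝ) (hCg : ∀ y, |g2 y - g1 y| ≤ Cg) :
    |(∫ y, f2 y * Real.exp (g2 y) ∂ν) / (∫ y, Real.exp (g2 y) ∂ν)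
      - (∫ y, f1 y * Real.exp (g1 y) ∂ν) / (∫ y, Real.exp (g1 y) ∂ν)|
      ≤ Cf + 2 * (F1 + F2) * Cg := by
  have : NeZero ν := ⟨hν⟩
  have hi1 : Integrable (fun y ↦ exp (g1 y)) ν :=
    integrable_exp_of_le hmg1 fun y ↦ (abs_le.1 (hbg1 y)).2
  have := isProbabilityMeasure_tilted hi1
  have hgibbs2 : ν.tilted g2 = (ν.tilted g1).tilted (g2 - g1) := by
    rw [tilted_tilted hi1, add_sub_cancel]
  have hh : Integrable (fun y ↦ exp ((g2 - g1) y)) (ν.tilted g1) :=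
    integrable_exp_of_le (hmg2.sub hmg1) fun y ↦ (abs_le.1 (hCg y)).2
  have hδ : ∀ x y, |(g2 - g1) x - (g2 - g1) y| ≤ 2 * Cg := fun x y ↦
    (abs_sub _ _).trans (by simpa only [Pi.sub_apply, two_mul] using add_le_add (hCg x) (hCg y))
  rw [← integral_tilted_eq_div, ← integral_tilted_eq_div, hgibbs2]
  linarith [abs_integral_tilted_sub_integral_le_of_abs_sub_le hmf1 hmf2 hbf1 hbf2 hCf hh hδ]

/-- Bound on the difference of Gibbs expectations: for bounded measurable
`g1, g2, f1, f2` on a finite nonzero measure space, with `Z_i = ∫ exp (g_i) dν`,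
`|∫ f2 e^{g2}/Z2 − ∫ f1 e^{g1}/Z1| ≤ ‖f2 − f1‖_∞ + 2(‖f1‖_∞ + ‖f2‖_∞)‖g2 − g1‖_∞`. -/
theorem gibbs_expectation_comparison
    {Y : Type*} [MeasurableSpace Y] (ν : Measure Y) [IsFiniteMeasure ν] (hν : ν ≠ 0)
    (g1 g2 f1 f2 : Y → ℝ)
    (hmg1 : Measurable g1) (hmg2 : Measurable g2)
    (hmf1 : Measurable f1) (hmf2 : Measurable f2)
    (Mg1 : ℝ) (hbg1 : ∀ y, |g1 y| ≤ Mg1) (Mg2 : ℝ) (hbg2 : ∀ y, |g2 y| ≤ Mg2)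
    (F1 : ℝ) (hbf1 : ∀ y, |f1 y| ≤ F1) (F2 : ℝ) (hbf2 : ∀ y, |f2 y| ≤ F2)
    (Cf : ℝ) (hCf : ∀ y, |f2 y - f1 y| ≤ Cf)
    (Cg : ℝ) (hCg : ∀ y, |g2 y - g1 y| ≤ Cg) :
    |(∫ y, f2 y * Real.exp (g2 y) ∂ν) / (∫ y, Real.exp (g2 y) ∂ν)
      - (∫ y, f1 y * Real.exp (g1 y) ∂ν) / (∫ y, Real.exp (g1 y) ∂ν)|
      ≤ Cf + 2 * (F1 + F2) * Cg :=
  gibbs_expectation_comparison_general ν hν g1 g2 f1 f2 hmg1 hmg2 hmf1 hmf2 Mg1 hbg1 F1 hbf1 F2 hbf2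
    Cf hCf Cg hCg
end

section
/- For bounded measurable functions g1, g2, f1, f2 on a finite measure space, setting ḡ_t = t g2 + (1−t) g1, Z_t = ∫ e^{ḡ_t} dν, and f̄_t = t f2 + (1−t) f1, the following identity holds: ∫ f2 e^{g2} Z_1^{-1} dν − ∫ f1 e^{g1} Z_0^{-1} dν = ∫_0^1 ∫ (f2 − f1) e^{ḡ_t} Z_t^{-1} dν dt + ∫_0^1 Cov_t(f̄_t(X), (g2 − g1)(X)) dt, where Cov_t denotes the covariance of random variables under the probability density e^{ḡ_t}/Z_t with respect to ν. -/
/-!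
Write `A_f(t) = ∫ f e^{ḡ_t} dν`, so that `Z_t = A_1(t)` and `E_t[f] = A_f(t) / Z_t`. Since
`ḡ_t = g1 + t (g2 - g1)` with `g2 - g1` bounded, differentiation under the integral sign gives
`A_f' = A_{f (g2 - g1)}`, hence by the quotient rule `d/dt E_t[f] = Cov_t(f, g2 - g1)`.
The left-hand side is `φ(1) - φ(0)` for `φ(t) = E_t[f̄_t] = t E_t[f2] + (1 - t) E_t[f1]`, whose
derivative is `E_t[f2] - E_t[f1] + t Cov_t(f2, g2 - g1) + (1 - t) Cov_t(f1, g2 - g1)`; the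
fundamental theorem of calculus and linearity of `E_t` and `Cov_t` in the first argument conclude.
-/

open MeasureTheory Real

/-- Partition function along the linear interpolation `ḡ_t = t g2 + (1-t) g1`. -/
noncomputable def gibbsZ {Y : Type*} [MeasurableSpace Y] (ν : Measure Y)
    (g1 g2 : Y → ℝ) (t : ℝ) : ℝ :=
  ∫ y, Real.exp (t * g2 y + (1 - t) * g1 y) ∂ν

/-- Expectation of `f` under the Gibbs density `e^{ḡ_t}/Z_t`. -/
noncomputable def gibbsE {Y : Type*} [MeasurableSpace Y] (ν : Measure Y)
    (g1 g2 : Y → ℝ) (t : ℝ) (f : Y → ℝ) : ℝ :=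
  (∫ y, f y * Real.exp (t * g2 y + (1 - t) * g1 y) ∂ν) / gibbsZ ν g1 g2 t

open Set

theorem exp_mul_le_exp_abs_mul {s u C : ℝ} (hu : |u| ≤ C) : exp (s * u) ≤ exp (|s| * C) :=
  exp_le_exp.2 <| (le_abs_self _).trans <| by
    rw [abs_mul]; exact mul_le_mul_of_nonneg_left hu (abs_nonneg s)

section ExpTilt

variable {Y : Type*} [MeasurableSpace Y] {ν : Measure Y} {F h : Y → ℝ} {C : ℝ}

theorem integrable_mul_exp_mul (hF : Integrable F ν) (hh : AEStronglyMeasurable h ν)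
    (hC : ∀ y, |h y| ≤ C) (s : ℝ) : Integrable (fun y => F y * exp (s * h y)) ν :=
  hF.mul_bdd (continuous_exp.comp_aestronglyMeasurable (hh.const_mul s)) <| ae_of_all _ fun y => by
    rw [norm_of_nonneg (exp_pos _).le]; exact exp_mul_le_exp_abs_mul (hC y)

theorem hasDerivAt_integral_mul_exp_mul (hF : Integrable F ν) (hh : AEStronglyMeasurable h ν)
    (hC : ∀ y, |h y| ≤ C) (t : ℝ) :
    HasDerivAt (fun s => ∫ y, F y * exp (s * h y) ∂ν)
      (∫ y, F y * h y * exp (t * h y) ∂ν) t := by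
  have hderiv : ∀ y x, HasDerivAt (fun s => F y * exp (s * h y)) (F y * h y * exp (x * h y)) x :=
    fun y x => by
      simpa [mul_comm, mul_left_comm, mul_assoc] using
        (((hasDerivAt_id x).mul_const (h y)).exp).const_mul (F y)
  have hbound : ∀ y, ∀ x ∈ Metric.ball t 1,
      ‖F y * h y * exp (x * h y)‖ ≤ ‖F y‖ * (C * exp ((|t| + 1) * C)) := by
    intro y x hx
    have hx' : |x| ≤ |t| + 1 := by
      have := abs_sub_abs_le_abs_sub x t
      rw [Metric.mem_ball, dist_eq] at hx
      linarith
    have hC0 : 0 ≤ C := (abs_nonneg _).trans (hC y)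
    rw [norm_mul, norm_mul, norm_of_nonneg (exp_pos _).le, mul_assoc]
    refine mul_le_mul_of_nonneg_left (mul_le_mul (hC y) ?_ (exp_pos _).le hC0) (norm_nonneg _)
    exact (exp_mul_le_exp_abs_mul (hC y)).trans (exp_le_exp.2 (by gcongr))
  exact (hasDerivAt_integral_of_dominated_loc_of_deriv_le (Metric.ball_mem_nhds t one_pos)
    (.of_forall fun s => (integrable_mul_exp_mul hF hh hC s).aestronglyMeasurable)
    (integrable_mul_exp_mul hF hh hC t)
    ((hF.aestronglyMeasurable.mul hh).mul
      (continuous_exp.comp_aestronglyMeasurable (hh.const_mul t)))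
    (ae_of_all _ (hbound ·)) (hF.norm.mul_const _) (ae_of_all _ fun y x _ => hderiv y x)).2

end ExpTilt

theorem sub_eq_integral_sub_add_integral_interp {a b a' b' : ℝ → ℝ}
    (ha : ∀ t ∈ Icc (0 : ℝ) 1, HasDerivAt a (a' t) t)
    (hb : ∀ t ∈ Icc (0 : ℝ) 1, HasDerivAt b (b' t) t)
    (ha' : ContinuousOn a' (Icc 0 1)) (hb' : ContinuousOn b' (Icc 0 1)) :
    a 1 - b 0
      = (∫ t in (0 : ℝ)..1, a t - b t) + ∫ t in (0 : ℝ)..1, t * a' t + (1 - t) * b' t := by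
  rw [← uIcc_of_le zero_le_one] at ha hb ha' hb'
  have hφ : ∀ t ∈ uIcc (0 : ℝ) 1, HasDerivAt (fun s => s * a s + (1 - s) * b s)
      ((a t - b t) + (t * a' t + (1 - t) * b' t)) t := fun t ht =>
    (((hasDerivAt_id' t).mul (ha t ht)).add
      (((hasDerivAt_const t (1 : ℝ)).sub (hasDerivAt_id' t)).mul (hb t ht))).congr_deriv
      (by simp only [Pi.sub_apply]; ring)
  have hdiff : IntervalIntegrable (fun t => a t - b t) volume 0 1 :=
    (ContinuousOn.sub (fun t ht => (ha t ht).continuousAt.continuousWithinAt)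
      (fun t ht => (hb t ht).continuousAt.continuousWithinAt)).intervalIntegrable
  have hinterp : IntervalIntegrable (fun t => t * a' t + (1 - t) * b' t) volume 0 1 :=
    ((continuousOn_id.mul ha').add
      ((continuousOn_const.sub continuousOn_id).mul hb')).intervalIntegrable
  rw [← intervalIntegral.integral_add hdiff hinterp,
    intervalIntegral.integral_eq_sub_of_hasDerivAt hφ (hdiff.add hinterp)]
  norm_num

theorem exp_interp_eq_exp_mul_exp (t a b : ℝ) :
    exp (t * b + (1 - t) * a) = exp a * exp (t * (b - a)) := by
  rw [← exp_add]; ring_nf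

noncomputable def gibbsIntegral {Y : Type*} [MeasurableSpace Y] (ν : Measure Y)
    (g1 g2 f : Y → ℝ) (t : ℝ) : ℝ :=
  ∫ y, f y * exp (t * g2 y + (1 - t) * g1 y) ∂ν

noncomputable def gibbsCov {Y : Type*} [MeasurableSpace Y] (ν : Measure Y)
    (g1 g2 : Y → ℝ) (t : ℝ) (f k : Y → ℝ) : ℝ :=
  gibbsE ν g1 g2 t (fun y => f y * k y) - gibbsE ν g1 g2 t f * gibbsE ν g1 g2 t k

section Gibbs

variable {Y : Type*} [MeasurableSpace Y] {ν : Measure Y} {g1 g2 f k m : Y → ℝ} {M1 M2 : ℝ}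
  (hg1 : AEStronglyMeasurable g1 ν) (hg2 : AEStronglyMeasurable g2 ν)
  (hb1 : ∀ y, |g1 y| ≤ M1) (hb2 : ∀ y, |g2 y| ≤ M2)

theorem gibbsE_eq_div (t : ℝ) :
    gibbsE ν g1 g2 t f = gibbsIntegral ν g1 g2 f t / gibbsZ ν g1 g2 t := rfl

theorem gibbsZ_eq_gibbsIntegral_one : gibbsZ ν g1 g2 = gibbsIntegral ν g1 g2 fun _ => 1 := by
  funext t; simp [gibbsZ, gibbsIntegral]

include hg1 hb1 in
theorem integrable_mul_exp_of_abs_le (hf : Integrable f ν) :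
    Integrable (fun y => f y * exp (g1 y)) ν :=
  hf.mul_bdd (continuous_exp.comp_aestronglyMeasurable hg1) <| ae_of_all _ fun y => by
    rw [norm_of_nonneg (exp_pos _).le]; exact exp_le_exp.2 ((le_abs_self _).trans (hb1 y))

include hg1 hg2 hb1 hb2

theorem integrable_mul_exp_interp (hf : Integrable f ν) (t : ℝ) :
    Integrable (fun y => f y * exp (t * g2 y + (1 - t) * g1 y)) ν := by
  simp_rw [exp_interp_eq_exp_mul_exp, ← mul_assoc]
  exact integrable_mul_exp_mul (integrable_mul_exp_of_abs_le hg1 hb1 hf) (hg2.sub hg1)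
    (fun y => (abs_sub _ _).trans (add_le_add (hb2 y) (hb1 y))) t

theorem hasDerivAt_gibbsIntegral (hf : Integrable f ν) (t : ℝ) :
    HasDerivAt (gibbsIntegral ν g1 g2 f)
      (gibbsIntegral ν g1 g2 (fun y => f y * (g2 y - g1 y)) t) t := by
  convert hasDerivAt_integral_mul_exp_mul (integrable_mul_exp_of_abs_le hg1 hb1 hf) (hg2.sub hg1)
    (fun y => (abs_sub _ _).trans (add_le_add (hb2 y) (hb1 y))) t using 1
  · funext s; simp only [gibbsIntegral, exp_interp_eq_exp_mul_exp, Pi.sub_apply, mul_assoc]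
  · simp only [gibbsIntegral, exp_interp_eq_exp_mul_exp, Pi.sub_apply]
    congr 1; funext y; ring

theorem gibbsE_mul_add_mul (hf : Integrable f ν) (hk : Integrable k ν) (t a b : ℝ) :
    gibbsE ν g1 g2 t (fun y => a * f y + b * k y)
      = a * gibbsE ν g1 g2 t f + b * gibbsE ν g1 g2 t k := by
  simp only [gibbsE, add_mul, mul_assoc,
    integral_add ((integrable_mul_exp_interp hg1 hg2 hb1 hb2 hf t).const_mul a)
      ((integrable_mul_exp_interp hg1 hg2 hb1 hb2 hk t).const_mul b),
    integral_const_mul, add_div, mul_div_assoc]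

theorem gibbsE_sub (hf : Integrable f ν) (hk : Integrable k ν) (t : ℝ) :
    gibbsE ν g1 g2 t (fun y => f y - k y) = gibbsE ν g1 g2 t f - gibbsE ν g1 g2 t k := by
  simpa [sub_eq_add_neg] using gibbsE_mul_add_mul hg1 hg2 hb1 hb2 hf hk t 1 (-1)

theorem gibbsCov_mul_add_mul_left (hf : Integrable f ν) (hk : Integrable k ν)
    (hfm : Integrable (fun y => f y * m y) ν) (hkm : Integrable (fun y => k y * m y) ν)
    (t a b : ℝ) :
    gibbsCov ν g1 g2 t (fun y => a * f y + b * k y) m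
      = a * gibbsCov ν g1 g2 t f m + b * gibbsCov ν g1 g2 t k m := by
  simp only [gibbsCov, add_mul, mul_assoc, gibbsE_mul_add_mul hg1 hg2 hb1 hb2 hfm hkm,
    gibbsE_mul_add_mul hg1 hg2 hb1 hb2 hf hk]
  ring

variable [IsFiniteMeasure ν] [NeZero ν]

theorem gibbsZ_pos (t : ℝ) : 0 < gibbsZ ν g1 g2 t :=
  integral_exp_pos <| by
    simpa using integrable_mul_exp_interp hg1 hg2 hb1 hb2 (integrable_const 1) t

theorem hasDerivAt_gibbsE (hf : Integrable f ν) (t : ℝ) :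
    HasDerivAt (fun s => gibbsE ν g1 g2 s f) (gibbsCov ν g1 g2 t f fun y => g2 y - g1 y) t := by
  have hZ : HasDerivAt (gibbsZ ν g1 g2) (gibbsIntegral ν g1 g2 (fun y => g2 y - g1 y) t) t := by
    rw [gibbsZ_eq_gibbsIntegral_one]
    simpa using hasDerivAt_gibbsIntegral hg1 hg2 hb1 hb2 (integrable_const 1) t
  have hZ0 := (gibbsZ_pos hg1 hg2 hb1 hb2 t).ne'
  refine ((hasDerivAt_gibbsIntegral hg1 hg2 hb1 hb2 hf t).div hZ hZ0).congr_deriv ?_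
  simp only [gibbsCov, gibbsE_eq_div]
  field_simp

theorem continuous_gibbsCov (hf : Integrable f ν) (hk : Integrable k ν)
    (hfk : Integrable (fun y => f y * k y) ν) : Continuous fun t => gibbsCov ν g1 g2 t f k := by
  have hE : ∀ {u : Y → ℝ}, Integrable u ν → Continuous fun t => gibbsE ν g1 g2 t u :=
    fun hu => continuous_iff_continuousAt.2 fun t =>
      (hasDerivAt_gibbsE hg1 hg2 hb1 hb2 hu t).continuousAt
  exact (hE hfk).sub ((hE hf).mul (hE hk))

end Gibbs

/-- Comparison lemma: with `f̄_t = t f2 + (1-t) f1`,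
`E_1[f2] − E_0[f1] = ∫_0^1 E_t[f2 − f1] dt + ∫_0^1 Cov_t(f̄_t, g2 − g1) dt`. -/
theorem gibbs_comparison_identity
    {Y : Type*} [MeasurableSpace Y] (ν : Measure Y) [IsFiniteMeasure ν] (hν : ν ≠ 0)
    (g1 g2 f1 f2 : Y → ℝ)
    (hmg1 : Measurable g1) (hmg2 : Measurable g2)
    (hmf1 : Measurable f1) (hmf2 : Measurable f2)
    (Mg1 : ℝ) (hbg1 : ∀ y, |g1 y| ≤ Mg1) (Mg2 : ℝ) (hbg2 : ∀ y, |g2 y| ≤ Mg2)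
    (F1 : ℝ) (hbf1 : ∀ y, |f1 y| ≤ F1) (F2 : ℝ) (hbf2 : ∀ y, |f2 y| ≤ F2) :
    gibbsE ν g1 g2 1 f2 - gibbsE ν g1 g2 0 f1
      = (∫ t in (0:ℝ)..1, gibbsE ν g1 g2 t (fun y => f2 y - f1 y))
        + ∫ t in (0:ℝ)..1,
            (gibbsE ν g1 g2 t (fun y => (t * f2 y + (1 - t) * f1 y) * (g2 y - g1 y))
              - gibbsE ν g1 g2 t (fun y => t * f2 y + (1 - t) * f1 y)
                * gibbsE ν g1 g2 t (fun y => g2 y - g1 y)) := by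
  have : NeZero ν := ⟨hν⟩
  have hg1 : AEStronglyMeasurable g1 ν := hmg1.aestronglyMeasurable
  have hg2 : AEStronglyMeasurable g2 ν := hmg2.aestronglyMeasurable
  have hf1 : Integrable f1 ν := .of_bound hmf1.aestronglyMeasurable F1 (ae_of_all _ hbf1)
  have hf2 : Integrable f2 ν := .of_bound hmf2.aestronglyMeasurable F2 (ae_of_all _ hbf2)
  have hh : ∀ y, ‖g2 y - g1 y‖ ≤ Mg2 + Mg1 :=
    fun y => (abs_sub _ _).trans (add_le_add (hbg2 y) (hbg1 y))
  have hh_int : Integrable (fun y => g2 y - g1 y) ν := .of_bound (hg2.sub hg1) _ (ae_of_all _ hh)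
  have hf1h := hf1.mul_bdd (hg2.sub hg1) (ae_of_all _ hh)
  have hf2h := hf2.mul_bdd (hg2.sub hg1) (ae_of_all _ hh)
  rw [sub_eq_integral_sub_add_integral_interp
    (fun t _ => hasDerivAt_gibbsE hg1 hg2 hbg1 hbg2 hf2 t)
    (fun t _ => hasDerivAt_gibbsE hg1 hg2 hbg1 hbg2 hf1 t)
    (continuous_gibbsCov hg1 hg2 hbg1 hbg2 hf2 hh_int hf2h).continuousOn
    (continuous_gibbsCov hg1 hg2 hbg1 hbg2 hf1 hh_int hf1h).continuousOn]
  congr 1 <;> refine intervalIntegral.integral_congr fun t _ => ?_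
  · exact (gibbsE_sub hg1 hg2 hbg1 hbg2 hf2 hf1 t).symm
  · exact (gibbsCov_mul_add_mul_left hg1 hg2 hbg1 hbg2 hf2 hf1 hf2h hf1h t t (1 - t)).symm
end

section
/- Let f_n = g_n + r_n where g_n epi-converges to g on a metric space V, and suppose |r_n(u)| ≤ c(1 + d(u, u_0))·α_n for all u ∈ V, some fixed point u_0, some finite constant c, and a sequence α_n → 0. Then f_n epi-converges to g. -/
/-!
On the ball `B(x, 1)` the perturbation is bounded by `|c| (2 + d(x, u₀)) |αₙ| → 0`, so
`fₙ - gₙ → 0` locally uniformly. Eventually this moves every infimum over a small ball around `x`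
by less than `ε`, hence moves the epi-limits by at most `ε`; as `ε` is arbitrary, `fₙ` and `gₙ`
have the same epi-limits.
-/

open Filter

/-- Epi-limit inferior: `li_e f_n(x) = sup_{k≥1} liminf_n inf_{v ∈ B(x,1/k)} f_n(v)`
(values in the extended reals). -/
noncomputable def epiLiminf {V : Type*} [MetricSpace V] (f : ℕ → V → ℝ) (x : V) : EReal :=
  ⨆ k : ℕ+, Filter.liminf
    (fun n => ⨅ v ∈ Metric.ball x (1 / ((k : ℕ) : ℝ)), ((f n v : ℝ) : EReal)) Filter.atTop

/-- Epi-limit superior: `ls_e f_n(x) = sup_{k≥1} limsup_n inf_{v ∈ B(x,1/k)} f_n(v)`. -/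
noncomputable def epiLimsup {V : Type*} [MetricSpace V] (f : ℕ → V → ℝ) (x : V) : EReal :=
  ⨆ k : ℕ+, Filter.limsup
    (fun n => ⨅ v ∈ Metric.ball x (1 / ((k : ℕ) : ℝ)), ((f n v : ℝ) : EReal)) Filter.atTop

/-- `f_n` epi-converges to `f` if `ls_e f_n(x) ≤ f(x) ≤ li_e f_n(x)` for all `x`. -/
def EpiConverges {V : Type*} [MetricSpace V] (f : ℕ → V → ℝ) (g : V → ℝ) : Prop :=
  ∀ x : V, epiLimsup f x ≤ ((g x : ℝ) : EReal) ∧ ((g x : ℝ) : EReal) ≤ epiLiminf f x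

open Metric Topology

namespace EReal

lemma continuous_add_coe (ε : ℝ) : Continuous (· + (ε : EReal)) :=
  continuous_iff_continuousAt.2 fun x =>
    ContinuousAt.comp (g := fun p : EReal × EReal => p.1 + p.2) (f := fun y => (y, (ε : EReal)))
      (EReal.continuousAt_add (by simp) (by simp)) (continuousAt_id.prodMk continuousAt_const)

lemma monotone_add_coe (ε : ℝ) : Monotone (· + (ε : EReal)) :=
  fun _ _ h => add_le_add_left h _

lemma le_of_forall_pos_le_add_coe {x y : EReal} (h : ∀ ε : ℝ, 0 < ε → y ≤ x + ε) : y ≤ x := by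
  have hx : Tendsto (fun ε : ℝ => x + (ε : EReal)) (𝓝[>] 0) (𝓝 x) := by
    have := ContinuousAt.comp (g := fun p : EReal × EReal => p.1 + p.2)
      (f := fun ε : ℝ => (x, (ε : EReal))) (x := 0) (EReal.continuousAt_add (by simp) (by simp))
      (continuousAt_const.prodMk continuous_coe_real_ereal.continuousAt)
    simpa [Function.comp_def] using this.tendsto.mono_left nhdsWithin_le_nhds
  exact ge_of_tendsto hx (eventually_nhdsWithin_of_forall h)

lemma biInf_le_biInf_add_coe {ι : Type*} {s : Set ι} {p q : ι → EReal} {ε : ℝ}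
    (h : ∀ i ∈ s, p i ≤ q i + ε) : ⨅ i ∈ s, p i ≤ (⨅ i ∈ s, q i) + ε := by
  rw [← EReal.sub_le_iff_le_add (.inl (coe_ne_bot ε)) (.inl (coe_ne_top ε))]
  refine le_iInf₂ fun i hi => ?_
  rw [EReal.sub_le_iff_le_add (.inl (coe_ne_bot ε)) (.inl (coe_ne_top ε))]
  exact (iInf₂_le i hi).trans (h i hi)

variable {ι : Type*} {l : Filter ι} [l.NeBot] {a b : ι → EReal} {ε : ℝ}

lemma limsup_le_limsup_add_coe (h : ∀ᶠ i in l, a i ≤ b i + ε) :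
    limsup a l ≤ limsup b l + ε :=
  (limsup_le_limsup h).trans_eq
    ((monotone_add_coe ε).map_limsup_of_continuousAt b (continuous_add_coe ε).continuousAt).symm

lemma liminf_le_liminf_add_coe (h : ∀ᶠ i in l, a i ≤ b i + ε) :
    liminf a l ≤ liminf b l + ε :=
  (liminf_le_liminf h).trans_eq
    ((monotone_add_coe ε).map_liminf_of_continuousAt b (continuous_add_coe ε).continuousAt).symm

lemma iSup_le_iSup_of_monotone_of_eventually_le_add {κ : Type*} [SemilatticeSup κ]
    {a b : κ → EReal} (ha : Monotone a)
    (h : ∀ ε : ℝ, 0 < ε → ∃ K, ∀ k ≥ K, a k ≤ b k + ε) : ⨆ k, a k ≤ ⨆ k, b k := by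
  refine le_of_forall_pos_le_add_coe fun ε hε => iSup_le fun k => ?_
  obtain ⟨K, hK⟩ := h ε hε
  calc a k ≤ a (k ⊔ K) := ha le_sup_left
    _ ≤ b (k ⊔ K) + ε := hK _ le_sup_right
    _ ≤ (⨆ k, b k) + ε := by gcongr; exact le_iSup b _

end EReal

section Epi

variable {V : Type*} [MetricSpace V]

lemma exists_pnat_ball_one_div_subset {x : V} {t : Set V} (ht : t ∈ 𝓝 x) :
    ∃ K : ℕ+, ∀ k ≥ K, ball x (1 / ((k : ℕ) : ℝ)) ⊆ t := by
  obtain ⟨δ, hδ, hball⟩ := Metric.mem_nhds_iff.1 ht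
  obtain ⟨n, hn⟩ := exists_nat_one_div_lt hδ
  refine ⟨n.succPNat, fun k hk => (ball_subset_ball ?_).trans hball⟩
  calc 1 / ((k : ℕ) : ℝ) ≤ 1 / ((n : ℝ) + 1) := by
        gcongr
        exact_mod_cast hk
    _ ≤ δ := hn.le

variable {f g : ℕ → V → ℝ} {x : V}

lemma monotone_limsup_biInf_ball (f : ℕ → V → ℝ) (x : V) :
    Monotone fun k : ℕ+ =>
      limsup (fun n => ⨅ v ∈ ball x (1 / ((k : ℕ) : ℝ)), (f n v : EReal)) atTop := by
  intro k k' hk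
  refine limsup_le_limsup (.of_forall fun n => biInf_mono fun u hu => ball_subset_ball ?_ hu)
  gcongr
  exact_mod_cast hk

lemma monotone_liminf_biInf_ball (f : ℕ → V → ℝ) (x : V) :
    Monotone fun k : ℕ+ =>
      liminf (fun n => ⨅ v ∈ ball x (1 / ((k : ℕ) : ℝ)), (f n v : EReal)) atTop := by
  intro k k' hk
  refine liminf_le_liminf (.of_forall fun n => biInf_mono fun u hu => ball_subset_ball ?_ hu)
  gcongr
  exact_mod_cast hk

lemma exists_eventually_biInf_ball_le_add
    (h : ∀ ε : ℝ, 0 < ε → ∃ t ∈ 𝓝 x, ∀ᶠ n in atTop, ∀ u ∈ t, f n u ≤ g n u + ε)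
    {ε : ℝ} (hε : 0 < ε) :
    ∃ K : ℕ+, ∀ k ≥ K, ∀ᶠ n in atTop,
      ⨅ v ∈ ball x (1 / ((k : ℕ) : ℝ)), (f n v : EReal) ≤
        (⨅ v ∈ ball x (1 / ((k : ℕ) : ℝ)), (g n v : EReal)) + ε := by
  obtain ⟨t, ht, hfg⟩ := h ε hε
  obtain ⟨K, hK⟩ := exists_pnat_ball_one_div_subset ht
  exact ⟨K, fun k hk => hfg.mono fun n hn =>
    EReal.biInf_le_biInf_add_coe fun u hu => by exact_mod_cast hn u (hK k hk hu)⟩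

lemma epiLimsup_le_epiLimsup
    (h : ∀ ε : ℝ, 0 < ε → ∃ t ∈ 𝓝 x, ∀ᶠ n in atTop, ∀ u ∈ t, f n u ≤ g n u + ε) :
    epiLimsup f x ≤ epiLimsup g x :=
  EReal.iSup_le_iSup_of_monotone_of_eventually_le_add (monotone_limsup_biInf_ball f x)
    fun _ hε =>
      let ⟨K, hK⟩ := exists_eventually_biInf_ball_le_add h hε
      ⟨K, fun k hk => EReal.limsup_le_limsup_add_coe (hK k hk)⟩

lemma epiLiminf_le_epiLiminf
    (h : ∀ ε : ℝ, 0 < ε → ∃ t ∈ 𝓝 x, ∀ᶠ n in atTop, ∀ u ∈ t, f n u ≤ g n u + ε) :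
    epiLiminf f x ≤ epiLiminf g x :=
  EReal.iSup_le_iSup_of_monotone_of_eventually_le_add (monotone_liminf_biInf_ball f x)
    fun _ hε =>
      let ⟨K, hK⟩ := exists_eventually_biInf_ball_le_add h hε
      ⟨K, fun k hk => EReal.liminf_le_liminf_add_coe (hK k hk)⟩

theorem EpiConverges.of_tendstoLocallyUniformly_sub {gl : V → ℝ} (hg : EpiConverges g gl)
    (hfg : TendstoLocallyUniformly (fun n u => f n u - g n u) 0 atTop) :
    EpiConverges f gl := by
  intro x
  have close : ∀ ε : ℝ, 0 < ε → ∃ t ∈ 𝓝 x, ∀ᶠ n in atTop, ∀ u ∈ t, |f n u - g n u| < ε :=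
    fun ε hε => by
      simpa only [Pi.zero_apply, dist_zero_left, Real.norm_eq_abs]
        using Metric.tendstoLocallyUniformly_iff.1 hfg ε hε x
  refine ⟨(epiLimsup_le_epiLimsup fun ε hε => ?_).trans (hg x).1,
    (hg x).2.trans (epiLiminf_le_epiLiminf fun ε hε => ?_)⟩ <;>
  · obtain ⟨t, ht, hclose⟩ := close ε hε
    exact ⟨t, ht, hclose.mono fun n hn u hu => by linarith [abs_lt.1 (hn u hu)]⟩

end Epi

lemma tendstoLocallyUniformly_of_abs_le_mul_dist {V ι : Type*} [PseudoMetricSpace V]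
    {l : Filter ι} {r : ι → V → ℝ} {u0 : V} {c : ℝ} {α : ι → ℝ}
    (hr : ∀ i u, |r i u| ≤ c * (1 + dist u u0) * α i) (hα : Tendsto α l (𝓝 0)) :
    TendstoLocallyUniformly r 0 l := by
  refine Metric.tendstoLocallyUniformly_iff.2 fun ε hε x => ⟨ball x 1, ball_mem_nhds x one_pos, ?_⟩
  have hsmall : Tendsto (fun i => |c| * (2 + dist x u0) * |α i|) l (𝓝 0) := by
    simpa using hα.abs.const_mul (|c| * (2 + dist x u0))
  filter_upwards [hsmall.eventually (gt_mem_nhds hε)] with i hi u hu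
  have hdist : 1 + dist u u0 ≤ 2 + dist x u0 := by
    linarith [dist_triangle u x u0, mem_ball.1 hu]
  calc dist 0 (r i u) = |r i u| := by simp
    _ ≤ |c * (1 + dist u u0) * α i| := (hr i u).trans (le_abs_self _)
    _ = |c| * (1 + dist u u0) * |α i| := by
        rw [abs_mul, abs_mul, abs_of_nonneg (by positivity : (0 : ℝ) ≤ 1 + dist u u0)]
    _ ≤ |c| * (2 + dist x u0) * |α i| := by gcongr
    _ < ε := hi

/-- If `f_n = g_n + r_n`, `g_n` epi-converges to `g`, and
`|r_n(u)| ≤ c (1 + d(u,u0)) α_n` with `α_n → 0`, then `f_n` epi-converges to `g`. -/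
theorem epiConverges_of_perturbation
    {V : Type*} [MetricSpace V] (f g r : ℕ → V → ℝ) (gl : V → ℝ)
    (u0 : V) (c : ℝ) (α : ℕ → ℝ)
    (hfg : ∀ n u, f n u = g n u + r n u)
    (hr : ∀ n u, |r n u| ≤ c * (1 + dist u u0) * α n)
    (hα : Tendsto α atTop (nhds 0))
    (hg : EpiConverges g gl) :
    EpiConverges f gl := by
  refine hg.of_tendstoLocallyUniformly_sub ?_
  have hsub : (fun n u => f n u - g n u) = r := by
    funext n u
    rw [hfg]
    ring
  exact hsub ▸ tendstoLocallyUniformly_of_abs_le_mul_dist hr hα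
end

section
/- Suppose f_n epi-converges to f on a metric space V, x_n minimizes f_n for each n, and x_n → x̄. Then x̄ minimizes f. -/
open Filter

section

variable {V : Type*} [MetricSpace V] {f : ℕ → V → ℝ}

theorem epiLiminf_le_liminf_of_tendsto {x : ℕ → V} {xbar : V}
    (hconv : Tendsto x atTop (nhds xbar)) :
    epiLiminf f xbar ≤ liminf (fun n => ((f n (x n) : ℝ) : EReal)) atTop := by
  refine iSup_le fun k => liminf_le_liminf ?_
  have hball : ∀ᶠ n in atTop, x n ∈ Metric.ball xbar (1 / ((k : ℕ) : ℝ)) :=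
    hconv (Metric.ball_mem_nhds xbar (by positivity))
  filter_upwards [hball] with n hn
  exact iInf₂_le (x n) hn

theorem limsup_le_epiLimsup_of_forall_le {x : ℕ → V} (v : V)
    (hmin : ∀ n (w : V), f n (x n) ≤ f n w) :
    limsup (fun n => ((f n (x n) : ℝ) : EReal)) atTop ≤ epiLimsup f v :=
  calc limsup (fun n => ((f n (x n) : ℝ) : EReal)) atTop
      ≤ limsup (fun n => ⨅ w ∈ Metric.ball v (1 / (((1 : ℕ+) : ℕ) : ℝ)),
          ((f n w : ℝ) : EReal)) atTop :=
        limsup_le_limsup (Eventually.of_forall fun n =>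
          le_iInf₂ fun w _ => EReal.coe_le_coe_iff.mpr (hmin n w))
    _ ≤ epiLimsup f v :=
        le_iSup (fun k : ℕ+ => limsup (fun n => ⨅ w ∈ Metric.ball v (1 / ((k : ℕ) : ℝ)),
          ((f n w : ℝ) : EReal)) atTop) 1

end

/-- If `f_n` epi-converges to `f`, `x_n` minimizes `f_n`, and `x_n → x̄`,
then `x̄` minimizes `f`. -/
theorem argmin_of_epiConverges
    {V : Type*} [MetricSpace V] (f : ℕ → V → ℝ) (fl : V → ℝ)
    (x : ℕ → V) (xbar : V)
    (hepi : EpiConverges f fl)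
    (hmin : ∀ n (v : V), f n (x n) ≤ f n v)
    (hconv : Tendsto x atTop (nhds xbar)) :
    ∀ v : V, fl xbar ≤ fl v := by
  intro v
  refine EReal.coe_le_coe_iff.mp ?_
  calc ((fl xbar : ℝ) : EReal)
      ≤ epiLiminf f xbar := (hepi xbar).2
    _ ≤ liminf (fun n => ((f n (x n) : ℝ) : EReal)) atTop :=
        epiLiminf_le_liminf_of_tendsto hconv
    _ ≤ limsup (fun n => ((f n (x n) : ℝ) : EReal)) atTop := liminf_le_limsup
    _ ≤ epiLimsup f v := limsup_le_epiLimsup_of_forall_le v hmin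
    _ ≤ fl v := (hepi v).1
end
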